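/- Let L be a nondegenerate even lattice, β, γ ∈ L° elements of the dual lattice, and 𝒴_β the standard lattice intertwining operator. Then 𝒴_{β,γ,ℤ} := e^{−πi⟨β,γ⟩} ε(γ,β)^{−1} 𝒴_β restricted to V_{β+L} ⊗ V_{γ+L} satisfies 𝒴_{β,γ,ℤ}(ι(e_β), x) ι(e_γ) = x^{⟨β,γ⟩} E^-(−β, x) ι(e_{β+γ}), a series whose coefficients are integer linear combinations of coefficients of products E^-(−β₁,x₁)⋯E^-(−β_k,x_k) ι(e_α e_{β+γ}) with β_i ∈ L° and α ∈ L. -/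

import Mathlib

open scoped BigOperators

/-- The coefficient of `x^n` in `exp(∑_{m ≥ 1} f(m) x^m)` for pairwise commuting operators
`f(m)`: the sum over partitions `(1^{m_1} 2^{m_2} ⋯)` of `n` of `∏_j f(j)^{m_j}/(j^{m_j} m_j!)`. -/
noncomputable def expCoeff {V : Type} [AddCommGroup V] [Module ℂ V]
    (f : ℕ → Module.End ℂ V) (n : ℕ) : Module.End ℂ V :=
  ∑ Λ : Nat.Partition n,
    (∏ j ∈ Λ.parts.toFinset,
      (((j : ℂ)) ^ (Λ.parts.count j) * (Nat.factorial (Λ.parts.count j) : ℂ))⁻¹) •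
      (Λ.parts.toList.map f).prod

/-- Coefficient of `x^{-p}` in `E^+(−β,x) = exp(∑_{n > 0} (−β(n)/n) x^{-n})`. -/
noncomputable def EplusC {V : Type} [AddCommGroup V] [Module ℂ V] {H : Type}
    (a : H → ℤ → Module.End ℂ V) (β : H) (p : ℕ) : Module.End ℂ V :=
  expCoeff (fun j => -(a β (j : ℤ))) p

/-- Coefficient of `x^{n}` in `E^-(−β,x) = exp(∑_{n > 0} (−β(−n)/n) x^{n})`. -/
noncomputable def EminusC {V : Type} [AddCommGroup V] [Module ℂ V] {H : Type}
    (a : H → ℤ → Module.End ℂ V) (β : H) (n : ℕ) : Module.End ℂ V :=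
  expCoeff (fun j => -(a β (-(j : ℤ)))) n

/-! On `ι(e_{β+γ})` every annihilation operator `β(n)`, `n > 0`, vanishes, so `E^+(−β,x)` acts as
the identity and `𝒴_β(ι(e_β),x)ι(e_γ)` collapses to
`e^{πi⟨β,γ⟩} ε(γ,β) x^{⟨β,γ⟩} E^-(−β,x) ι(e_{β+γ})`; the normalising factor cancels the scalar.
Each coefficient is then a one-factor product with `α = 0`, since bimultiplicativity forces
`ε(0,·) = 1`. -/

theorem Module.End.list_prod_map_apply_eq_zero {R V ι : Type*} [Semiring R] [AddCommMonoid V]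
    [Module R V] (f : ι → Module.End R V) {v : V} {l : List ι} (hl : l ≠ [])
    (hf : ∀ m ∈ l, f m v = 0) : (l.map f).prod v = 0 := by
  obtain ⟨xs, y, rfl⟩ := (List.eq_nil_or_concat l).resolve_left hl
  rw [List.concat_eq_append, List.map_append, List.prod_append, List.map_singleton,
    List.prod_singleton, Module.End.mul_apply, hf y (by simp), map_zero]

theorem Nat.Partition.parts_ne_zero {n : ℕ} (hn : 0 < n) (Λ : n.Partition) : Λ.parts ≠ 0 := by
  intro h
  have hsum := Λ.parts_sum
  rw [h, Multiset.sum_zero] at hsum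
  omega

theorem expCoeff_zero {V : Type} [AddCommGroup V] [Module ℂ V] (f : ℕ → Module.End ℂ V) :
    expCoeff f 0 = 1 := by
  simp [expCoeff, Nat.Partition.partition_zero_parts]

theorem expCoeff_apply_eq_zero {V : Type} [AddCommGroup V] [Module ℂ V]
    (f : ℕ → Module.End ℂ V) {v : V} (hf : ∀ m, 0 < m → f m v = 0) {p : ℕ} (hp : 0 < p) :
    expCoeff f p v = 0 := by
  refine (LinearMap.sum_apply _ _ _).trans (Finset.sum_eq_zero fun Λ _ => ?_)
  rw [LinearMap.smul_apply, Module.End.list_prod_map_apply_eq_zero f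
    (by simpa using Λ.parts_ne_zero hp) (fun m hm => hf m (Λ.parts_pos (by simpa using hm))),
    smul_zero]

theorem EplusC_zero {V H : Type} [AddCommGroup V] [Module ℂ V]
    (a : H → ℤ → Module.End ℂ V) (β : H) : EplusC a β 0 = 1 :=
  expCoeff_zero _

theorem EplusC_apply_eq_zero {V H : Type} [AddCommGroup V] [Module ℂ V]
    {a : H → ℤ → Module.End ℂ V} {β : H} {v : V} (hv : ∀ n : ℤ, 0 < n → a β n v = 0)
    {p : ℕ} (hp : 0 < p) : EplusC a β p v = 0 :=
  expCoeff_apply_eq_zero _ (fun m hm => by simp [hv m (by exact_mod_cast hm)]) hp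

theorem finsum_EminusC_EplusC_apply {V H : Type} [AddCommGroup V] [Module ℂ V]
    {a : H → ℤ → Module.End ℂ V} {β : H} {v : V} (hv : ∀ n : ℤ, 0 < n → a β n v = 0) (n : ℕ) :
    ∑ᶠ j : ℕ, EminusC a β (n + j) (EplusC a β j v) = EminusC a β n v := by
  rw [finsum_eq_single _ 0 fun j hj => by
    rw [EplusC_apply_eq_zero hv (Nat.pos_of_ne_zero hj), map_zero]]
  rw [EplusC_zero, Module.End.one_apply, add_zero]

theorem lattice_integral_intertwining_operator_general
    (V : Type) [AddCommGroup V] [Module ℂ V]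
    (L Ld : Type) [AddCommGroup L] [AddCommGroup Ld]
    (incl : L →+ Ld) (B : Ld → Ld → ℚ)
    (a : Ld → ℤ → Module.End ℂ V) (e : Ld → V)
    (eps : Ld → Ld → ℂ) (eMul : Ld → Module.End ℂ V)
    (heps : ∀ δ ξ : Ld, eps δ ξ ≠ 0)
    (hbm1 : ∀ δ δ' ξ : Ld, eps (δ + δ') ξ = eps δ ξ * eps δ' ξ)
    (heMul : ∀ δ ξ : Ld, eMul δ (e ξ) = eps δ ξ • e (δ + ξ))
    (hann : ∀ (δ ξ : Ld) (n : ℤ), 0 < n → a δ n (e ξ) = 0)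
    (β γ : Ld)
    (Ycomp : ℂ → V)
    -- `Ycomp` is the coefficient family of
    -- `𝒴_β(ι(e_β),x)ι(e_γ) = E^-(−β,x)E^+(−β,x) e_β x^β e^{πiβ} c(·,β) ι(e_γ)`:
    (hY1 : ∀ n : ℕ,
      Ycomp (((B β γ : ℚ) : ℂ) + n)
        = (Complex.exp (Real.pi * Complex.I * ((B β γ : ℚ) : ℂ))
            * (eps γ β * (eps β γ)⁻¹) * eps β γ) •
            ∑ᶠ j : ℕ, (EminusC a β (n + j)) ((EplusC a β j) (e (β + γ))))
    (hY2 : ∀ t : ℂ, (∀ n : ℕ, t ≠ ((B β γ : ℚ) : ℂ) + n) → Ycomp t = 0) :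
    let YZ : ℂ → V := fun t =>
      (Complex.exp (-(Real.pi * Complex.I * ((B β γ : ℚ) : ℂ))) * (eps γ β)⁻¹) • Ycomp t
    (∀ n : ℕ, YZ (((B β γ : ℚ) : ℂ) + n) = (EminusC a β n) (e (β + γ))) ∧
    (∀ t : ℂ, (∀ n : ℕ, t ≠ ((B β γ : ℚ) : ℂ) + n) → YZ t = 0) ∧
    (∀ t : ℂ, YZ t ∈ Submodule.span ℤ
      {v : V | ∃ (k : ℕ) (βs : Fin k → Ld) (ns : Fin k → ℕ) (α : L),
        v = (List.ofFn fun i => EminusC a (βs i) (ns i)).prod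
              ((eMul (incl α)) (e (β + γ)))}) := by
  intro YZ
  have hscalar : (Complex.exp (-(Real.pi * Complex.I * ((B β γ : ℚ) : ℂ))) * (eps γ β)⁻¹) *
      (Complex.exp (Real.pi * Complex.I * ((B β γ : ℚ) : ℂ))
        * (eps γ β * (eps β γ)⁻¹) * eps β γ) = 1 := by
    rw [Complex.exp_neg]
    field_simp [heps γ β, heps β γ]
  have hcoeff : ∀ n : ℕ, YZ (((B β γ : ℚ) : ℂ) + n) = EminusC a β n (e (β + γ)) := fun n => by
    rw [show YZ _ = _ • Ycomp _ from rfl, hY1, finsum_EminusC_EplusC_apply (hann β (β + γ)),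
      smul_smul, hscalar, one_smul]
  have hvanish : ∀ t : ℂ, (∀ n : ℕ, t ≠ ((B β γ : ℚ) : ℂ) + n) → YZ t = 0 := fun t ht => by
    rw [show YZ t = _ • Ycomp t from rfl, hY2 t ht, smul_zero]
  have heps_zero : eps 0 (β + γ) = 1 := by
    have h := hbm1 0 0 (β + γ)
    rw [zero_add] at h
    exact (mul_eq_left₀ (heps 0 _)).mp h.symm
  refine ⟨hcoeff, hvanish, fun t => ?_⟩
  by_cases ht : ∃ n : ℕ, t = ((B β γ : ℚ) : ℂ) + n
  · obtain ⟨n, rfl⟩ := ht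
    rw [hcoeff n]
    refine Submodule.subset_span ⟨1, fun _ => β, fun _ => n, 0, ?_⟩
    simp [heMul, heps_zero]
  · push Not at ht
    rw [hvanish t ht]
    exact Submodule.zero_mem _

/-- for `β, γ ∈ L°`, the renormalized lattice intertwining operator
`𝒴_{β,γ,ℤ} = e^{−πi⟨β,γ⟩} ε(γ,β)^{−1} 𝒴_β` satisfies
`𝒴_{β,γ,ℤ}(ι(e_β), x) ι(e_γ) = x^{⟨β,γ⟩} E^-(−β, x) ι(e_{β+γ})`, a series whose coefficients
are integer linear combinations of coefficients of products
`E^-(−β₁,x₁)⋯E^-(−β_k,x_k) ι(e_α e_{β+γ})` with `β_i ∈ L°`, `α ∈ L`.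
Series with complex powers are represented by their coefficient functions `ℂ → V`. -/
theorem lattice_integral_intertwining_operator
    (V : Type) [AddCommGroup V] [Module ℂ V]
    (L Ld : Type) [AddCommGroup L] [AddCommGroup Ld]
    (incl : L →+ Ld) (B : Ld → Ld → ℚ)
    (a : Ld → ℤ → Module.End ℂ V) (e : Ld → V)
    (eps : Ld → Ld → ℂ) (eMul : Ld → Module.End ℂ V)
    (heps : ∀ δ ξ : Ld, eps δ ξ ≠ 0)
    (hbm1 : ∀ δ δ' ξ : Ld, eps (δ + δ') ξ = eps δ ξ * eps δ' ξ)
    (hbm2 : ∀ δ ξ ξ' : Ld, eps δ (ξ + ξ') = eps δ ξ * eps δ ξ')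
    (heMul : ∀ δ ξ : Ld, eMul δ (e ξ) = eps δ ξ • e (δ + ξ))
    (hann : ∀ (δ ξ : Ld) (n : ℤ), 0 < n → a δ n (e ξ) = 0)
    (β γ : Ld)
    (Ycomp : ℂ → V)
    -- `Ycomp` is the coefficient family of
    -- `𝒴_β(ι(e_β),x)ι(e_γ) = E^-(−β,x)E^+(−β,x) e_β x^β e^{πiβ} c(·,β) ι(e_γ)`:
    (hY1 : ∀ n : ℕ,
      Ycomp (((B β γ : ℚ) : ℂ) + n)
        = (Complex.exp (Real.pi * Complex.I * ((B β γ : ℚ) : ℂ))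
            * (eps γ β * (eps β γ)⁻¹) * eps β γ) •
            ∑ᶠ j : ℕ, (EminusC a β (n + j)) ((EplusC a β j) (e (β + γ))))
    (hY2 : ∀ t : ℂ, (∀ n : ℕ, t ≠ ((B β γ : ℚ) : ℂ) + n) → Ycomp t = 0) :
    let YZ : ℂ → V := fun t =>
      (Complex.exp (-(Real.pi * Complex.I * ((B β γ : ℚ) : ℂ))) * (eps γ β)⁻¹) • Ycomp t
    (∀ n : ℕ, YZ (((B β γ : ℚ) : ℂ) + n) = (EminusC a β n) (e (β + γ))) ∧
    (∀ t : ℂ, (∀ n : ℕ, t ≠ ((B β γ : ℚ) : ℂ) + n) → YZ t = 0) ∧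
    (∀ t : ℂ, YZ t ∈ Submodule.span ℤ
      {v : V | ∃ (k : ℕ) (βs : Fin k → Ld) (ns : Fin k → ℕ) (α : L),
        v = (List.ofFn fun i => EminusC a (βs i) (ns i)).prod
              ((eMul (incl α)) (e (β + γ)))}) :=
  lattice_integral_intertwining_operator_general V L Ld incl B a e eps eMul heps hbm1 heMul hann β γ
    Ycomp hY1 hY2
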